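/- Let K be a differential field of characteristic 0, algebraically closed, equipped with a field embedding ℂ → K whose image consists of constants, together with an element z ∈ K such that ∂z = 1, and assume that K is algebraic over its subfield ℂ(z) generated by the image of ℂ and z. Let (𝒦,∂) be a differential field extension of K whose field of constants is exactly the image of ℂ. Let x_1,…,x_n ∈ K and y_1,…,y_n ∈ 𝒦^× satisfy ∂y_i/y_i = ∂x_i for every i. If for every (m_1,…,m_n) ∈ ℤ^n \ {0} the element m_1x_1 + ⋯ + m_nx_n does not lie in the image of ℂ, then y_1,…,y_n are algebraically independent over K, i.e. the transcendence degree of K(y_1,…,y_n) over K equals n. (Case (E) of Ax's theorem for tori, proved via Kolchin's theorem and Formula (1).) -/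

import Mathlib

/-!
If the `yᵢ` were algebraically dependent over `K`, the monomials `∏ yᵢ ^ αᵢ`, whose logarithmic
derivatives lie in `K`, would be `K`-linearly dependent. Differentiating a relation of minimal
length and subtracting a suitable multiple of it gives a shorter relation, so a minimal relation
has all its terms with the same logarithmic derivative, and the ratio of two of them is a
constant. Hence `t = ∏ yᵢ ^ mᵢ ∈ K` for some `m ≠ 0`, and `s = ∑ mᵢ xᵢ ∈ K` satisfies `t′ = s′ t`
(Kolchin).

Both `s` and `t` are algebraic over `ℂ(z)`. If `s` were not constant, it would be transcendental
over `ℂ`, so by the exchange property `t` would be algebraic over `ℂ(s)`. For the derivation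
`d/ds = (s′)⁻¹ ∂`, which preserves `ℂ(s)` and satisfies `dt/ds = t`, differentiating the minimal
polynomial of `t` over `ℂ(s)` shows that its constant coefficient `a ≠ 0` satisfies
`da/ds = n a` with `n ≥ 1` the degree. Writing `a = p(s)/q(s)`, this says that the Wronskian of
`q` and `p` equals `n p q`, which is impossible by degree.
-/

open Polynomial IntermediateField
open scoped Differential

def Derivation.ofLeibniz {R A : Type*} [CommSemiring R] [CommRing A] [Algebra R A] (D : A → A)
    (hadd : ∀ a b, D (a + b) = D a + D b) (hmul : ∀ a b, D (a * b) = a * D b + D a * b)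
    (hR : ∀ r, D (algebraMap R A r) = 0) : Derivation R A A where
  toFun := D
  map_add' := hadd
  map_smul' r a := by simp [Algebra.smul_def, hmul, hR]
  map_one_eq_zero' := by simpa using hR 1
  leibniz' a b := by
    change D (a * b) = a * D b + b * D a
    rw [hmul, mul_comm b]

@[reducible]
def Differential.restrict {M S : Type*} [CommRing M] [Differential M] [SetLike S M]
    [SubringClass S M] (L : S) (hL : ∀ x ∈ L, x′ ∈ L) : Differential L where
  deriv :=
    { toFun x := ⟨x.1′, hL _ x.2⟩
      map_add' x y := Subtype.ext (map_add _ _ _)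
      map_smul' n x := Subtype.ext (by simp)
      map_one_eq_zero' := Subtype.ext (by simp)
      leibniz' x y := Subtype.ext (by simp [Derivation.leibniz]) }

theorem algebraicIndependent_of_linearIndependent_prod_pow {R A ι : Type*} [CommRing R]
    [CommRing A] [Algebra R A] [Fintype ι] {x : ι → A}
    (h : LinearIndependent R fun α : ι →₀ ℕ => ∏ i, x i ^ α i) : AlgebraicIndependent R x := by
  rw [algebraicIndependent_iff]
  intro p hp
  ext α
  rw [linearIndependent_iff'] at h
  have hcoeff := h p.support p.coeff (by
    rw [MvPolynomial.aeval_def, MvPolynomial.eval₂_eq'] at hp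
    simpa [Algebra.smul_def] using hp)
  by_cases hα : α ∈ p.support
  · simpa using hcoeff α hα
  · simpa using hα

theorem Polynomial.wronskian_ne_C_mul_mul {K : Type*} [Field K] {p q : K[X]} (hp : p ≠ 0)
    (hq : q ≠ 0) {c : K} (hc : c ≠ 0) : wronskian p q ≠ C c * p * q := by
  intro h
  have hdeg := degree_wronskian_lt_add hp hq
  rw [h, degree_mul, degree_mul, degree_C hc, zero_add] at hdeg
  exact lt_irrefl _ hdeg

namespace Differential

lemma logDeriv_zpow {R : Type*} [Field R] [Differential R] {a : R} (ha : a ≠ 0) (m : ℤ) :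
    logDeriv (a ^ m) = m * logDeriv a := by
  cases m with
  | ofNat k => simp [logDeriv_pow]
  | negSucc k =>
    rw [zpow_negSucc, inv_eq_one_div, logDeriv_div _ _ one_ne_zero (pow_ne_zero _ ha),
      logDeriv_one, logDeriv_pow]
    push_cast
    ring

theorem div_mem_range_of_logDeriv_smul_eq {K M : Type*} [Field K] [Field M] [Algebra K M]
    [Differential M] [ContainConstants K M] {c e : K} (hc : c ≠ 0) (he : e ≠ 0) {u v : M}
    (hu : u ≠ 0) (hv : v ≠ 0) (h : logDeriv (c • u) = logDeriv (e • v)) :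
    u / v ∈ (algebraMap K M).range := by
  obtain ⟨k, hk⟩ := mem_range_of_deriv_eq_zero K (x := (c • u) / (e • v)) <| by
    rw [← logDeriv_eq_zero, logDeriv_div _ _ (smul_ne_zero hc hu) (smul_ne_zero he hv), h,
      sub_self]
  refine ⟨k * e / c, ?_⟩
  have hc' : algebraMap K M c ≠ 0 := by simpa using hc
  have he' : algebraMap K M e ≠ 0 := by simpa using he
  rw [map_div₀, map_mul, hk, Algebra.smul_def, Algebra.smul_def]
  field_simp

variable {K M : Type*} [Field K] [Field M] [Algebra K M] [Differential K] [Differential M]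
  [DifferentialAlgebra K M]

lemma deriv_smul_of_logDeriv_eq (c : K) {u : M} {a : K} (hu : logDeriv u = algebraMap K M a)
    (hu0 : u ≠ 0) : (c • u)′ = (c′ + c * a) • u := by
  have hu' : u′ = algebraMap K M a * u := by
    rw [← hu, logDeriv, div_mul_cancel₀ _ hu0]
  rw [Algebra.smul_def, Derivation.leibniz, hu', smul_eq_mul, smul_eq_mul, deriv_algebraMap,
    Algebra.smul_def, map_add, map_mul]
  ring

lemma deriv_sum_smul {ι : Type*} (s : Finset ι) (g : ι → K) {u : ι → M} {a : ι → K}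
    (ha : ∀ i, logDeriv (u i) = algebraMap K M (a i)) (hu0 : ∀ i, u i ≠ 0) :
    (∑ i ∈ s, g i • u i)′ = ∑ i ∈ s, ((g i)′ + g i * a i) • u i := by
  simp only [map_sum, deriv_smul_of_logDeriv_eq _ (ha _) (hu0 _)]

theorem exists_div_mem_range_of_not_linearIndependent [ContainConstants K M] {ι : Type*}
    {u : ι → M} (hu0 : ∀ i, u i ≠ 0) (hu : ∀ i, logDeriv (u i) ∈ (algebraMap K M).range)
    (h : ¬LinearIndependent K u) : ∃ i j, i ≠ j ∧ u i / u j ∈ (algebraMap K M).range := by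
  classical
  choose a ha using hu
  rw [linearIndependent_iff'] at h
  push Not at h
  obtain ⟨s, g, hsum, β, hβ, hgβ⟩ := h
  induction s using Finset.strongInduction generalizing g β with
  | H s ih =>
  -- `g'` is the relation `(∑ g i • u i)′ - r • ∑ g i • u i = 0`, with `r` chosen to kill `g' β`
  set r := logDeriv (g β) + a β
  set g' : ι → K := fun i => (g i)′ + g i * a i - r * g i
  have hsum' : ∑ i ∈ s, g' i • u i = 0 := by
    have h0 : (∑ i ∈ s, g i • u i)′ - r • ∑ i ∈ s, g i • u i = 0 := by simp [hsum]
    rw [deriv_sum_smul s g (fun i => (ha i).symm) hu0, Finset.smul_sum,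
      ← Finset.sum_sub_distrib] at h0
    simpa only [smul_smul, ← sub_smul] using h0
  have hg'β : g' β = 0 := by
    simp only [g', r, logDeriv]
    field_simp
    ring
  by_cases hshorter : ∃ i ∈ s.erase β, g' i ≠ 0
  · obtain ⟨α, hα, hg'α⟩ := hshorter
    exact ih _ (Finset.erase_ssubset hβ) g'
      (by rw [Finset.sum_erase _ (by rw [hg'β, zero_smul])]; exact hsum') α hα hg'α
  push Not at hshorter
  obtain ⟨α, hα, hgα⟩ : ∃ α ∈ s.erase β, g α ≠ 0 := by
    by_contra! hall
    rw [Finset.sum_eq_single_of_mem β hβ fun i hi hne => by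
      rw [hall i (Finset.mem_erase.mpr ⟨hne, hi⟩), zero_smul]] at hsum
    exact smul_ne_zero hgβ (hu0 β) hsum
  have hlog : ∀ i ∈ s, g i ≠ 0 → logDeriv (g i • u i) = algebraMap K M r := by
    intro i hi hgi
    have hg'i : g' i = 0 :=
      if hiβ : i = β then hiβ ▸ hg'β else hshorter i (Finset.mem_erase.mpr ⟨hiβ, hi⟩)
    rw [logDeriv, deriv_smul_of_logDeriv_eq _ (ha i).symm (hu0 i),
      show (g i)′ + g i * a i = r * g i by linear_combination hg'i, ← smul_smul, smul_div_assoc,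
      div_self (smul_ne_zero hgi (hu0 i)), Algebra.smul_def, mul_one]
  exact ⟨α, β, Finset.ne_of_mem_erase hα, div_mem_range_of_logDeriv_smul_eq hgα hgβ (hu0 α)
    (hu0 β) ((hlog α (Finset.mem_of_mem_erase hα) hgα).trans (hlog β hβ hgβ).symm)⟩

theorem exists_prod_zpow_mem_range_of_not_algebraicIndependent [ContainConstants K M]
    {ι : Type*} [Fintype ι] {y : ι → M} (hy0 : ∀ i, y i ≠ 0)
    (hy : ∀ i, logDeriv (y i) ∈ (algebraMap K M).range) (h : ¬AlgebraicIndependent K y) :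
    ∃ m : ι → ℤ, m ≠ 0 ∧ ∏ i, y i ^ m i ∈ (algebraMap K M).range := by
  have hmon0 (α : ι →₀ ℕ) : ∏ i, y i ^ α i ≠ 0 :=
    Finset.prod_ne_zero_iff.mpr fun i _ => pow_ne_zero _ (hy0 i)
  obtain ⟨α, β, hαβ, hmem⟩ := exists_div_mem_range_of_not_linearIndependent hmon0
    (fun α => by
      rw [logDeriv_prod _ _ _ fun i _ => pow_ne_zero _ (hy0 i)]
      exact sum_mem fun i _ => by
        rw [logDeriv_pow]; exact mul_mem (natCast_mem _ _) (hy i))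
    (mt algebraicIndependent_of_linearIndependent_prod_pow h)
  refine ⟨fun i => α i - β i, fun hm => hαβ (Finsupp.ext fun i => ?_), ?_⟩
  · simpa [sub_eq_zero] using congrFun hm i
  · convert hmem using 1
    rw [← Finset.prod_div_distrib]
    refine Finset.prod_congr rfl fun i _ => ?_
    rw [zpow_sub₀ (hy0 i), zpow_natCast, zpow_natCast]

theorem exists_logDeriv_eq_natCast_mul_of_isIntegral {t : M} (ht : IsIntegral K t) (ht0 : t ≠ 0)
    {g : K} (htg : logDeriv t = algebraMap K M g) :
    ∃ n : ℕ, n ≠ 0 ∧ ∃ a : K, a ≠ 0 ∧ logDeriv a = n * g := by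
  set P := minpoly K t
  have hPt : aeval t P = 0 := minpoly.aeval K t
  have hP : P.Monic := minpoly.monic ht
  have ht' : t′ = algebraMap K M g * t := by rw [← htg, logDeriv, div_mul_cancel₀ _ ht0]
  -- `Q(t) = (P(t))′ - n g P(t)`, and the coefficients of degree `≥ n` cancel since `P` is monic
  set Q := mapCoeffs P + C g * X * derivative P - C (P.natDegree * g) * P
  have hQt : aeval t Q = 0 := by
    have h := deriv_aeval_eq t P
    rw [hPt, Derivation.map_zero, ht'] at h
    simp only [Q, map_sub, map_add, map_mul, aeval_C, aeval_X, hPt, mul_zero, sub_zero]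
    linear_combination -h
  have hcoeff (j : ℕ) : Q.coeff j = (P.coeff j)′ + (j - P.natDegree) * g * P.coeff j := by
    cases j <;> simp [Q, coeff_C_mul, mul_assoc, coeff_derivative] <;> ring
  have hQ : Q = 0 := by
    by_contra hQ
    refine absurd (minpoly.degree_le_of_ne_zero K t hQ hQt) (not_le.2 ?_)
    rw [degree_eq_natDegree hP.ne_zero]
    refine (degree_lt_iff_coeff_zero _ _).2 fun j hj => ?_
    rw [hcoeff]
    obtain hj | hj := hj.eq_or_lt
    · simp [← hj, hP.coeff_natDegree]
    · simp [coeff_eq_zero_of_natDegree_lt hj]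
  have hP0 : P.coeff 0 ≠ 0 := minpoly.coeff_zero_ne_zero ht ht0
  refine ⟨P.natDegree, (minpoly.natDegree_pos ht).ne', P.coeff 0, hP0, ?_⟩
  have h0 := hcoeff 0
  rw [hQ, coeff_zero] at h0
  rw [logDeriv, div_eq_iff hP0]
  linear_combination -h0

end Differential

section AdjoinSimple

variable {F M : Type*} [Field F] [Field M] [Algebra F M]

theorem IntermediateField.aeval_mem_adjoin_simple (s : M) (p : F[X]) : aeval s p ∈ F⟮s⟯ :=
  algebra_adjoin_le_adjoin F {s} (aeval_mem_adjoin_singleton F s)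

theorem IntermediateField.isAlgebraic_adjoin_simple_of_transcendental {z s t : M}
    (hs : Transcendental F s) (hsz : IsAlgebraic F⟮z⟯ s) (ht : IsAlgebraic F⟮z⟯ t) :
    IsAlgebraic F⟮s⟯ t := by
  let N := AlgebraicIndependent.matroid F M
  have hcl (a b : M) : a ∈ N.closure {b} ↔ IsAlgebraic F⟮b⟯ a := by
    rw [AlgebraicIndependent.matroid_closure_eq, SetLike.mem_coe,
      Subalgebra.mem_algebraicClosure, isAlgebraic_adjoin_iff]
  have hcl₀ (a : M) : a ∈ N.closure ∅ ↔ IsAlgebraic F a := by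
    rw [AlgebraicIndependent.matroid_closure_eq, SetLike.mem_coe,
      Subalgebra.mem_algebraicClosure, Algebra.adjoin_empty,
      Subalgebra.isAlgebraic_bot_iff (algebraMap F M).injective]
  have hzs : z ∈ N.closure {s} := by
    simpa using (N.closure_exchange (X := ∅) ⟨by simpa using (hcl s z).2 hsz, mt (hcl₀ s).1 hs⟩).1
  exact (hcl t s).1 (N.closure_subset_closure_of_subset_closure
    (Set.singleton_subset_iff.2 hzs) ((hcl t z).2 ht))

namespace Derivation

variable (d : Derivation F M M)

theorem mem_adjoin_simple_of_mem {s a : M} (hs : d s ∈ F⟮s⟯) (ha : a ∈ F⟮s⟯) : d a ∈ F⟮s⟯ := by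
  obtain ⟨p, q, rfl⟩ := (mem_adjoin_simple_iff F a).1 ha
  have hp := aeval_mem_adjoin_simple (F := F) s p
  have hq := aeval_mem_adjoin_simple (F := F) s q
  rw [leibniz_div, d.map_aeval, d.map_aeval]
  simp only [smul_eq_mul]
  exact mul_mem (pow_mem (inv_mem hq) 2) (sub_mem
    (mul_mem hq (mul_mem (aeval_mem_adjoin_simple s _) hs))
    (mul_mem hp (mul_mem (aeval_mem_adjoin_simple s _) hs)))

theorem eq_zero_of_mem_adjoin_simple_of_apply_eq_natCast_mul [CharZero F] {s : M}
    (hs : Transcendental F s) (hds : d s = 1) {n : ℕ} (hn : n ≠ 0) {a : M} (ha : a ∈ F⟮s⟯)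
    (hda : d a = n * a) : a = 0 := by
  obtain ⟨p, q, rfl⟩ := (mem_adjoin_simple_iff F a).1 ha
  by_contra ha0
  have hq0 : aeval s q ≠ 0 := by rintro h; simp [h] at ha0
  have hp0 : aeval s p ≠ 0 := by rintro h; simp [h] at ha0
  refine wronskian_ne_C_mul_mul (p := q) (q := p) (by rintro rfl; simp at hq0)
    (by rintro rfl; simp at hp0) (Nat.cast_ne_zero.2 hn : (n : F) ≠ 0)
    (transcendental_iff_injective.1 hs ?_)
  rw [leibniz_div, d.map_aeval, d.map_aeval, hds] at hda
  simp only [wronskian, map_sub, map_mul, aeval_C, smul_eq_mul, mul_one] at hda ⊢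
  push_cast
  field_simp at hda
  linear_combination hda

theorem apply_eq_zero_of_apply_eq_apply_mul [IsAlgClosed F] [CharZero F] {z s t : M}
    (hs : IsAlgebraic F⟮z⟯ s) (ht : IsAlgebraic F⟮z⟯ t) (ht0 : t ≠ 0) (hst : d t = d s * t) :
    d s = 0 := by
  by_contra hds
  have hstr : Transcendental F s := fun h => hds <| by
    obtain ⟨c, rfl⟩ := minpoly.mem_range_of_degree_eq_one F s
      (IsAlgClosed.degree_eq_one_of_irreducible F (minpoly.irreducible h.isIntegral))
    exact d.map_algebraMap c
  set δ := (d s)⁻¹ • d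
  have hδs : δ s = 1 := by simp [δ, hds]
  let _ : Differential M := ⟨δ.restrictScalars ℤ⟩
  let _ : Differential F⟮s⟯ :=
    .restrict F⟮s⟯ fun a ha => δ.mem_adjoin_simple_of_mem (hδs ▸ one_mem _) ha
  have : DifferentialAlgebra F⟮s⟯ M := ⟨fun _ => rfl⟩
  obtain ⟨n, hn, a, ha0, hda⟩ := Differential.exists_logDeriv_eq_natCast_mul_of_isIntegral
    (isAlgebraic_adjoin_simple_of_transcendental hstr hs ht).isIntegral ht0 (g := 1) <| by
      change δ t / t = _
      simp [δ, hst, ht0, hds]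
  refine ha0 <| Subtype.ext <|
    δ.eq_zero_of_mem_adjoin_simple_of_apply_eq_natCast_mul hstr hδs hn a.2 ?_
  rw [Differential.logDeriv, mul_one, div_eq_iff ha0] at hda
  have h : ((a′ : F⟮s⟯) : M) = n * a := by simpa using congrArg (algebraMap F⟮s⟯ M) hda
  exact h

end Derivation

end AdjoinSimple

theorem ax_case_E_tori_general
    (𝒦 : Type*) [Field 𝒦]
    (D : 𝒦 → 𝒦)
    (hadd : ∀ a b : 𝒦, D (a + b) = D a + D b)
    (hmul : ∀ a b : 𝒦, D (a * b) = a * D b + D a * b)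
    -- an embedding of ℂ whose image is exactly the field of constants of 𝒦
    (emb : ℂ →+* 𝒦) (hconst : ∀ w : 𝒦, D w = 0 ↔ w ∈ Set.range emb)
    -- the base field K : a differential subfield, algebraically closed,
    -- containing ℂ and an element z with D z = 1, and algebraic over ℂ(z)
    (K : Subfield 𝒦) (hDK : ∀ x ∈ K, D x ∈ K)
    (hCK : Set.range emb ⊆ K)
    (z : 𝒦)
    (halg : ∀ x ∈ K, IsAlgebraic (Subfield.closure (Set.range emb ∪ {z})) x)
    -- the data: xᵢ ∈ K, yᵢ ∈ 𝒦ˣ with D yᵢ / yᵢ = D xᵢ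
    (n : ℕ) (x : Fin n → 𝒦) (hx : ∀ i, x i ∈ K)
    (y : Fin n → 𝒦ˣ)
    (hxy : ∀ i, D (y i) / (y i : 𝒦) = D (x i))
    -- non-degeneracy: no nonzero integer combination of the xᵢ is a constant
    (hnd : ∀ m : Fin n → ℤ, m ≠ 0 → (∑ i, (m i : 𝒦) * x i) ∉ Set.range emb) :
    AlgebraicIndependent K (fun i => (y i : 𝒦)) := by
  let _ : Algebra ℂ 𝒦 := emb.toAlgebra
  let d : Derivation ℂ 𝒦 𝒦 := .ofLeibniz D hadd hmul fun c => (hconst _).2 ⟨c, rfl⟩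
  let _ : Differential 𝒦 := ⟨d.restrictScalars ℤ⟩
  let _ : Differential K := .restrict K hDK
  have : DifferentialAlgebra K 𝒦 := ⟨fun _ => rfl⟩
  have : Differential.ContainConstants K 𝒦 := ⟨fun h => ⟨⟨_, hCK ((hconst _).1 h)⟩, rfl⟩⟩
  by_contra hdep
  obtain ⟨m, hm, hmK⟩ := Differential.exists_prod_zpow_mem_range_of_not_algebraicIndependent
    (fun i => (y i).ne_zero) (fun i => ⟨⟨D (x i), hDK _ (hx i)⟩, (hxy i).symm⟩) hdep
  set t := ∏ i, (y i : 𝒦) ^ m i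
  have htK : t ∈ K := by obtain ⟨t', ht'⟩ := hmK; exact ht' ▸ t'.2
  have ht0 : t ≠ 0 := Finset.prod_ne_zero_iff.2 fun i _ => zpow_ne_zero _ (y i).ne_zero
  set s := ∑ i, (m i : 𝒦) * x i
  have hsK : s ∈ K := sum_mem fun i _ => mul_mem (intCast_mem K _) (hx i)
  have hts : d t = d s * t := by
    have hlog : Differential.logDeriv t = d s := by
      rw [Differential.logDeriv_prod _ _ _ fun i _ => zpow_ne_zero _ (y i).ne_zero]
      simp only [s, ← zsmul_eq_mul, map_sum, map_zsmul]
      refine Finset.sum_congr rfl fun i _ => ?_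
      rw [Differential.logDeriv_zpow (y i).ne_zero, zsmul_eq_mul]
      exact congrArg _ (hxy i)
    rw [← hlog, Differential.logDeriv, div_mul_cancel₀ _ ht0]
    rfl
  exact hnd m hm ((hconst s).1 (d.apply_eq_zero_of_apply_eq_apply_mul
    (halg s hsK) (halg t htK) ht0 hts))

/-- **Case (E) of Ax's theorem for tori** (§1.1/§2): `K = ℂ(z)^alg` with derivation
extending `d/dz`, `(𝒦, D)` a differential extension with constants exactly `ℂ`.
If `x₁,…,xₙ ∈ K`, `y₁,…,yₙ ∈ 𝒦ˣ` satisfy `D yᵢ / yᵢ = D xᵢ` and no nonzero integer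
combination `m₁x₁ + ⋯ + mₙxₙ` is a complex constant, then `y₁,…,yₙ` are
algebraically independent over `K`. -/
theorem ax_case_E_tori
    (𝒦 : Type*) [Field 𝒦] [CharZero 𝒦]
    (D : 𝒦 → 𝒦)
    (hadd : ∀ a b : 𝒦, D (a + b) = D a + D b)
    (hmul : ∀ a b : 𝒦, D (a * b) = a * D b + D a * b)
    -- an embedding of ℂ whose image is exactly the field of constants of 𝒦
    (emb : ℂ →+* 𝒦) (hconst : ∀ w : 𝒦, D w = 0 ↔ w ∈ Set.range emb)
    -- the base field K : a differential subfield, algebraically closed,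
    -- containing ℂ and an element z with D z = 1, and algebraic over ℂ(z)
    (K : Subfield 𝒦) (hDK : ∀ x ∈ K, D x ∈ K) (hKac : IsAlgClosed K)
    (hCK : Set.range emb ⊆ K)
    (z : 𝒦) (hzK : z ∈ K) (hz : D z = 1)
    (halg : ∀ x ∈ K, IsAlgebraic (Subfield.closure (Set.range emb ∪ {z})) x)
    -- the data: xᵢ ∈ K, yᵢ ∈ 𝒦ˣ with D yᵢ / yᵢ = D xᵢ
    (n : ℕ) (x : Fin n → 𝒦) (hx : ∀ i, x i ∈ K)
    (y : Fin n → 𝒦ˣ)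
    (hxy : ∀ i, D (y i) / (y i : 𝒦) = D (x i))
    -- non-degeneracy: no nonzero integer combination of the xᵢ is a constant
    (hnd : ∀ m : Fin n → ℤ, m ≠ 0 → (∑ i, (m i : 𝒦) * x i) ∉ Set.range emb) :
    AlgebraicIndependent K (fun i => (y i : 𝒦)) :=
  ax_case_E_tori_general 𝒦 D hadd hmul emb hconst K hDK hCK z halg n x hx y hxy hnd
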